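/- arXiv:2311.02292 — 3 statements merged into one kernel-verified Lean document; each statement's English description precedes it below -/
import Mathlib

section
/- Let A ∈ M_n(ℝ) be Hurwitz (all eigenvalues of A over ℂ have negative real part) and let G ∈ M_n(ℝ). Then the infinite-horizon Gramian P∞ := ∫₀^{+∞} exp(tA) G exp(tAᵀ) dt converges (the integral exists entrywise), and P∞ satisfies the algebraic Lyapunov equation A P∞ + P∞ Aᵀ + G = 0. -/
/-!
Hurwitz stability of `A` bounds the spectral radius of `exp A` below one: `exp A = p(A)` for
a polynomial `p`, and `p` agrees with `exp` on the eigenvalues of `A`, so the spectral mapping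
theorem for polynomials gives `σ(exp A) = exp(σ(A))`. Gelfand's formula then makes
`‖exp(k A)‖` decay geometrically, hence `exp(t A)` decays exponentially. So the integrand
`F t = exp(t A) G exp(t Aᵀ)` is integrable on `(0, ∞)` and tends to `0`, and integrating
`F' = A F + F Aᵀ` gives `A P∞ + P∞ Aᵀ = -F 0 = -G`.
-/

open Matrix MeasureTheory NormedSpace Polynomial Filter Asymptotics Set Topology
-- Any norm on matrices would do for the decay estimates; this one is a Banach algebra norm.
open scoped Matrix.Norms.Operator

theorem integrableOn_Ioi_of_isBigO_exp_neg {E : Type*} [NormedAddCommGroup E] {f : ℝ → E}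
    {a b : ℝ} (hb : 0 < b) (hf : ContinuousOn f (Ici a))
    (ho : f =O[atTop] fun x => Real.exp (-b * x)) : IntegrableOn f (Ioi a) :=
  ((hf.locallyIntegrableOn measurableSet_Ici).integrableOn_of_isBigO_atTop ho
    ⟨Ioi b, Ioi_mem_atTop b, exp_neg_integrableOn_Ioi b hb⟩).mono_set Ioi_subset_Ici_self

namespace spectrum

variable {A : Type*} [NormedRing A] [NormedAlgebra ℂ A] [CompleteSpace A]

theorem isBigO_pow_of_spectralRadius_lt (a : A) {b : ℝ}
    (hb : spectralRadius ℂ a < ENNReal.ofReal (Real.exp (-b))) :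
    (fun n : ℕ => a ^ n) =O[atTop] fun n => Real.exp (-b * n) := by
  refine IsBigO.of_bound 1 ?_
  filter_upwards [(pow_norm_pow_one_div_tendsto_nhds_spectralRadius a).eventually_lt_const hb,
    eventually_gt_atTop 0] with n hn hn0
  rw [ENNReal.ofReal_lt_ofReal_iff (Real.exp_pos _), one_div,
    Real.rpow_inv_lt_iff_of_pos (norm_nonneg _) (Real.exp_pos _).le (by positivity),
    ← Real.exp_mul] at hn
  simpa [Real.norm_eq_abs, abs_of_pos (Real.exp_pos _)] using hn.le

theorem isBigO_exp_smul_of_spectralRadius_exp_lt (a : A) {b : ℝ}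
    (hb : spectralRadius ℂ (exp a) < ENNReal.ofReal (Real.exp (-b))) :
    (fun t : ℝ => exp ((t : ℂ) • a)) =O[atTop] fun t => Real.exp (-b * t) := by
  let : NormedAlgebra ℚ A := .restrictScalars ℚ ℂ A
  have hsplit (t : ℝ) :
      exp ((t : ℂ) • a) = exp a ^ ⌊t⌋₊ * exp (((t - ⌊t⌋₊ : ℝ) : ℂ) • a) := by
    rw [← NormedSpace.exp_nsmul,
      ← NormedSpace.exp_add_of_commute (((Commute.refl a).smul_left _).smul_right _)]
    congr 1
    rw [← Nat.cast_smul_eq_nsmul ℂ, ← add_smul]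
    push_cast
    ring_nf
  obtain ⟨M, hM⟩ := (isCompact_Icc (a := (0 : ℝ)) (b := 1)).exists_bound_of_continuousOn
    (by fun_prop : Continuous fun s : ℝ => exp ((s : ℂ) • a)).continuousOn
  have hfract : ∀ t : ℝ, 0 ≤ t → t - ⌊t⌋₊ ∈ Icc (0 : ℝ) 1 := fun t ht =>
    ⟨sub_nonneg.mpr (Nat.floor_le ht), by linarith [Nat.lt_floor_add_one t]⟩
  have hfrac :
      (fun t : ℝ => exp (((t - ⌊t⌋₊ : ℝ) : ℂ) • a)) =O[atTop] fun _ => (1 : ℝ) := by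
    refine IsBigO.of_bound M ?_
    filter_upwards [eventually_ge_atTop 0] with t ht
    simpa using hM _ (hfract t ht)
  have hfloor :
      (fun t : ℝ => Real.exp (-b * ⌊t⌋₊)) =O[atTop] fun t => Real.exp (-b * t) := by
    refine IsBigO.of_bound (Real.exp |b|) ?_
    filter_upwards [eventually_ge_atTop 0] with t ht
    obtain ⟨h0, h1⟩ := hfract t ht
    simp only [Real.norm_eq_abs, Real.abs_exp, ← Real.exp_add]
    gcongr
    nlinarith [le_abs_self b, neg_abs_le b]
  have hprod := (((isBigO_pow_of_spectralRadius_lt _ hb).comp_tendsto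
    tendsto_nat_floor_atTop).trans hfloor).mul hfrac
  simp only [mul_one] at hprod
  exact hprod.congr_left fun t => (hsplit t).symm

end spectrum

section Sylvester

variable {𝔸 : Type*} [NormedRing 𝔸] [NormedAlgebra ℝ 𝔸] [CompleteSpace 𝔸]

theorem hasDerivAt_exp_smul_mul_mul_exp_smul (a b g : 𝔸) (t : ℝ) :
    HasDerivAt (fun u : ℝ => exp (u • a) * g * exp (u • b))
      (a * (exp (t • a) * g * exp (t • b)) + exp (t • a) * g * exp (t • b) * b) t := by
  refine (((hasDerivAt_exp_smul_const' a t).mul_const g).mul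
    (hasDerivAt_exp_smul_const b t)).congr_deriv ?_
  simp only [mul_assoc]

theorem mul_integral_add_integral_mul_eq_neg {a b g : 𝔸}
    (hint : IntegrableOn (fun t : ℝ => exp (t • a) * g * exp (t • b)) (Ioi 0))
    (hlim : Tendsto (fun t : ℝ => exp (t • a) * g * exp (t • b)) atTop (𝓝 0)) :
    a * (∫ t in Ioi (0 : ℝ), exp (t • a) * g * exp (t • b)) +
      (∫ t in Ioi (0 : ℝ), exp (t • a) * g * exp (t • b)) * b = -g := by
  have hftc := integral_Ioi_of_hasDerivAt_of_tendsto'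
    (fun t _ => hasDerivAt_exp_smul_mul_mul_exp_smul a b g t)
    ((hint.const_mul a).add (hint.mul_const b)) hlim
  rwa [integral_add (hint.const_mul a) (hint.mul_const b), integral_const_mul_of_integrable hint,
    integral_mul_const_of_integrable hint, zero_smul, zero_smul, exp_zero, one_mul, mul_one,
    zero_sub] at hftc

end Sylvester

namespace Matrix

variable {m 𝕂 : Type*} [Fintype m] [DecidableEq m] [RCLike 𝕂]

theorem exp_mulVec_of_hasEigenvector {B : Matrix m m 𝕂} {μ : 𝕂} {v : m → 𝕂}
    (hv : Module.End.HasEigenvector (toLin' B) μ v) : exp B *ᵥ v = exp μ • v := by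
  let evalAt : Matrix m m 𝕂 →L[𝕂] m → 𝕂 :=
    LinearMap.toContinuousLinearMap ((LinearMap.applyₗ v).comp toLin'.toLinearMap)
  refine ((exp_series_hasSum_exp' (𝕂 := 𝕂) B).mapL evalAt).unique ?_
  convert (exp_series_hasSum_exp' (𝕂 := 𝕂) μ).smul_const v using 2 with k
  simp [evalAt, hv.pow_apply, smul_smul]

theorem exp_mem_adjoin_singleton (B : Matrix m m 𝕂) : exp B ∈ Algebra.adjoin 𝕂 {B} := by
  let S := Subalgebra.toSubmodule (Algebra.adjoin 𝕂 {B})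
  refine S.closed_of_finiteDimensional.mem_of_tendsto
    (exp_series_hasSum_exp' (𝕂 := 𝕂) B).tendsto_sum_nat (.of_forall fun N => ?_)
  exact S.sum_mem fun k _ =>
    S.smul_mem _ (Subalgebra.pow_mem _ (Algebra.self_mem_adjoin_singleton 𝕂 B) k)

theorem spectrum_exp (B : Matrix m m ℂ) :
    spectrum ℂ (exp B) = Complex.exp '' spectrum ℂ B := by
  cases isEmpty_or_nonempty m
  · simp [spectrum.of_subsingleton]
  obtain ⟨p, hp⟩ := (AlgHom.mem_range _).mp
    (Algebra.adjoin_singleton_eq_range_aeval ℂ B ▸ exp_mem_adjoin_singleton B)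
  rw [← hp, spectrum.map_polynomial_aeval]
  refine Set.image_congr fun μ hμ => ?_
  obtain ⟨v, hv⟩ := (Module.End.hasEigenvalue_iff_mem_spectrum.mpr
    ((spectrum_toLin' B).symm ▸ hμ)).exists_hasEigenvector
  have hpv := Module.End.aeval_apply_of_hasEigenvector (p := p) hv
  change aeval (toLinAlgEquiv' B) p v = _ at hpv
  rw [aeval_algHom_apply, toLinAlgEquiv'_apply, hp, exp_mulVec_of_hasEigenvector hv] at hpv
  rw [Complex.exp_eq_exp_ℂ]
  exact smul_left_injective ℂ hv.2 hpv.symm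

theorem spectralRadius_exp_lt_one {B : Matrix m m ℂ} (hB : ∀ z ∈ spectrum ℂ B, z.re < 0) :
    spectralRadius ℂ (exp B) < 1 := by
  rcases (spectrum ℂ (exp B)).eq_empty_or_nonempty with h | h
  · simp [spectralRadius, h]
  refine ENNReal.coe_one ▸ spectrum.spectralRadius_lt_of_forall_lt_of_nonempty h fun z hz => ?_
  obtain ⟨w, hw, rfl⟩ := spectrum_exp B ▸ hz
  rw [← NNReal.coe_lt_coe, coe_nnnorm, Complex.norm_exp, NNReal.coe_one, Real.exp_lt_one_iff]
  exact hB w hw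

theorem map_exp_ofReal (A : Matrix m m ℝ) :
    (exp A).map (↑) = exp (A.map ((↑) : ℝ → ℂ)) :=
  NormedSpace.map_exp (algebraMap ℝ ℂ).mapMatrix
    (continuous_id.matrix_map Complex.continuous_ofReal) A

theorem exists_isBigO_exp_smul_of_forall_re_neg {A : Matrix m m ℝ}
    (hA : ∀ z ∈ spectrum ℂ (A.map ((↑) : ℝ → ℂ)), z.re < 0) :
    ∃ b > 0, (fun t : ℝ => exp (t • A)) =O[atTop] fun t => Real.exp (-b * t) := by
  obtain ⟨r, hρr, hr1⟩ := exists_between (spectralRadius_exp_lt_one hA)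
  have hr_pos : 0 < r.toReal := ENNReal.toReal_pos (pos_of_gt hρr).ne' (ne_top_of_lt hr1)
  have hr_lt_one : r.toReal < 1 := by
    simpa using ENNReal.toReal_strict_mono ENNReal.one_ne_top hr1
  refine ⟨-Real.log r.toReal, neg_pos.mpr (Real.log_neg hr_pos hr_lt_one), ?_⟩
  have hb : spectralRadius ℂ (exp (A.map ((↑) : ℝ → ℂ))) <
      ENNReal.ofReal (Real.exp (-(-Real.log r.toReal))) := by
    rwa [neg_neg, Real.exp_log hr_pos, ENNReal.ofReal_toReal (ne_top_of_lt hr1)]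
  let reCLM : Matrix m m ℂ →L[ℝ] Matrix m m ℝ :=
    LinearMap.toContinuousLinearMap (Complex.reLm.mapMatrix)
  have hre : ∀ t : ℝ, reCLM (exp ((t : ℂ) • A.map (↑))) = exp (t • A) := fun t => by
    have hsmul : (t : ℂ) • A.map (↑) = (t • A).map ((↑) : ℝ → ℂ) := by
      ext; simp
    rw [hsmul, ← map_exp_ofReal]
    ext; simp [reCLM]
  exact ((reCLM.isBigO_comp _ atTop).congr_left hre).trans
    (spectrum.isBigO_exp_smul_of_spectralRadius_exp_lt _ hb)

theorem isBigO_exp_smul_transpose {A : Matrix m m ℝ} {g : ℝ → ℝ}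
    (hA : (fun t : ℝ => exp (t • A)) =O[atTop] g) :
    (fun t : ℝ => exp (t • Aᵀ)) =O[atTop] g := by
  let transposeCLM : Matrix m m ℝ →L[ℝ] Matrix m m ℝ :=
    LinearMap.toContinuousLinearMap (transposeLinearEquiv m m ℝ ℝ).toLinearMap
  refine ((transposeCLM.isBigO_comp _ atTop).congr_left fun t => ?_).trans hA
  change (exp (t • A))ᵀ = exp (t • Aᵀ)
  rw [← exp_transpose, transpose_smul]

end Matrix

/-- If `A ∈ M_n(ℝ)` is Hurwitz and `G ∈ M_n(ℝ)`, then the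
infinite-horizon Gramian `P∞ := ∫₀^∞ exp(tA) G exp(tAᵀ) dt` converges (entrywise) and
satisfies the algebraic Lyapunov equation `A P∞ + P∞ Aᵀ + G = 0`. -/
theorem stmt_11 (n : ℕ) (A G : Matrix (Fin n) (Fin n) ℝ)
    (hHurwitz : ∀ z ∈ spectrum ℂ (A.map (fun x : ℝ => (x : ℂ))), z.re < 0)
    (Pinf : Matrix (Fin n) (Fin n) ℝ)
    (hPinf : ∀ i j, Pinf i j =
      ∫ t in Set.Ioi (0:ℝ),
        (NormedSpace.exp (t • A) * G * NormedSpace.exp (t • Aᵀ)) i j) :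
    (∀ i j, IntegrableOn
      (fun t : ℝ =>
        (NormedSpace.exp (t • A) * G * NormedSpace.exp (t • Aᵀ)) i j)
      (Set.Ioi 0)) ∧
    A * Pinf + Pinf * Aᵀ + G = 0 := by
  obtain ⟨b, hb, hdecay⟩ := exists_isBigO_exp_smul_of_forall_re_neg hHurwitz
  have hgramian : (fun t : ℝ => exp (t • A) * G * exp (t • Aᵀ)) =O[atTop]
      fun t => Real.exp (-(2 * b) * t) := by
    refine ((hdecay.mul (isBigO_const_const G one_ne_zero atTop)).mul
      (isBigO_exp_smul_transpose hdecay)).congr_right fun t => ?_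
    rw [mul_one, ← Real.exp_add]
    ring_nf
  have hint := integrableOn_Ioi_of_isBigO_exp_neg (a := 0) (by positivity)
    (by fun_prop) hgramian
  have hlim := hgramian.trans_tendsto <| Real.tendsto_exp_atBot.comp <|
    tendsto_id.const_mul_atTop_of_neg (by linarith)
  let entry (i j : Fin n) : Matrix (Fin n) (Fin n) ℝ →L[ℝ] ℝ :=
    LinearMap.toContinuousLinearMap (LinearMap.proj j ∘ₗ LinearMap.proj i)
  have hP : Pinf = ∫ t in Ioi (0 : ℝ), exp (t • A) * G * exp (t • Aᵀ) := by
    ext i j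
    exact (hPinf i j).trans ((entry i j).integral_comp_comm hint)
  refine ⟨fun i j => (entry i j).integrable_comp hint, ?_⟩
  rw [hP]
  exact eq_neg_iff_add_eq_zero.mp (mul_integral_add_integral_mul_eq_neg hint hlim)
end

section
/- Fix positive integers n and even m. Let α ∈ ℝ^{n×n} be symmetric; let β₁,…,βₙ ∈ ℂ^{n×n} be Hermitian with Θ_ℓ := Im β_ℓ, θ_{jkℓ} := (Θ_ℓ)_{jk}, θ_{ℓ••} := (θ_{ℓjk})_{j,k}, Re β_{ℓ••} := ((Re β)_{ℓjk})_{j,k}; let ℧ := [Θ₁;…;Θₙ] ∈ ℝ^{n²×n} and Θ ⋄ u := [Θ₁u … Θₙu]. Let M ∈ ℝ^{m×n}, N ∈ ℝ^{m}, J := I_{m/2} ⊗ [[0,1],[−1,0]], Ω := I_m + iJ. Define Ã := 2 Θ ⋄ (MᵀJN) + 2 Σ_ℓ Θ_ℓ Mᵀ (M θ_{ℓ••} + J M Re β_{ℓ••}), A(E) := 2(Θ ⋄ E) + Ã, and b := −2 ℧ᵀ col(MᵀJMα). Let μ₀ ∈ ℝⁿ, let P ∈ ℝ^{n×n} be symmetric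 positive semidefinite, let F ∈ ℝ^{ν×n} with F√P ≠ 0 and Σ := FᵀF, define Λ₀ := 4 ℧ᵀ ((α + Σ_ℓ μ₀,ℓ β_ℓ) ⊗ (MᵀΩM)) ℧ and assume ⟨Σ, Re Λ₀⟩ > 0; define Λ̇₀(E) := 4 ℧ᵀ ((Σ_ℓ (A(E)μ₀ + b)_ℓ β_ℓ) ⊗ (MᵀΩM)) ℧ and the objective g(E) := ⟨Σ, 2 A(E)PA(E)ᵀ + 2 A(E)(Re Λ₀ + 2μ₀bᵀ) + Re Λ̇₀(E)⟩ + 2|Fb|². Define R := ℧ᵀ(P ⊗ Σ)℧ and K := ℧ᵀ col(Σ(ÃP + (1/2)Re Λ₀ + bμ₀ᵀ)) + ( ⟨℧Σ℧ᵀ, Re((Σ_j (Σ_ℓ μ₀,ℓ Θ_ℓ)_{jk} β_j) ⊗ (MᵀΩM))⟩ )_{1≤k≤n}. Then a vector E ∈ ℝⁿ is a global minimizer of g over ℝⁿ (equivalently, a global maximizer over ℝⁿ, for each fixed ε > 0, of the approximate decoherence time τ̂(ε) = τ′ε + (1/2)τ″(E)ε² with τ′ := ‖F√P‖²/⟨Σ,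 Re Λ₀⟩ and τ″(E) := −g(E)(τ′)²/⟨Σ, Re Λ₀⟩) if and only if 2RE + K = 0. -/
open Matrix
open scoped Kronecker

section

open scoped ComplexOrder

/-- The positive semidefinite square root of a positive semidefinite matrix, as defined in
Mathlib (December 2024) under this name; it has since been removed from Mathlib. -/
noncomputable def Matrix.PosSemidef.sqrt {n : Type*} [Fintype n] [DecidableEq n]
    {𝕜 : Type*} [RCLike 𝕜] {A : Matrix n n 𝕜} (hA : A.PosSemidef) : Matrix n n 𝕜 :=
  (hA.1.eigenvectorUnitary : Matrix n n 𝕜) *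
    diagonal (fun i => ((√(hA.1.eigenvalues i) : ℝ) : 𝕜)) *
    (star hA.1.eigenvectorUnitary : Matrix n n 𝕜)

end

/-!
Since `vec (Θ ⋄ E) = ℧ E` and `A(E) = 2 (Θ ⋄ E) + Ã` is affine in `E`, every term of `g` is a
polynomial of degree at most two in `E`. Moving all traces into the form
`⟨X, Θ ⋄ E⟩ = (℧ᵀ vec X)ᵀ E` and using `(P ⊗ Σ) vec X = vec (Σ X P)` gives
`g(E) = 8 (Eᵀ R E + Kᵀ E) + const`; here `Re Λ₀` is symmetric because `Λ₀` is Hermitian, and the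
`Λ̇₀` term is linear in `E` because `Λ̇₀(E)` is linear in the coefficients `A(E) μ₀ + b`.
As `R = ℧ᵀ (P ⊗ Σ) ℧ ⪰ 0`, this convex quadratic is minimal exactly where its gradient
`8 (2 R E + K)` vanishes. Finally `τ̂(ε) = τ′ ε - c g(E)` with `c = τ′² ε² / (2 ⟨Σ, Re Λ₀⟩) > 0`,
as `τ′ ≠ 0` by `F √P ≠ 0`.
-/

section Quadratic

variable {ι : Type*} [Fintype ι]

theorem Matrix.IsSymm.dotProduct_mulVec_comm {R : Type*} [CommSemiring R] {A : Matrix ι ι R}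
    (hA : A.IsSymm) (x y : ι → R) : x ⬝ᵥ A *ᵥ y = y ⬝ᵥ A *ᵥ x := by
  rw [dotProduct_mulVec, ← mulVec_transpose, hA.eq, dotProduct_comm]

theorem Matrix.PosSemidef.forall_quadratic_le_iff {R : Matrix ι ι ℝ} (hR : R.PosSemidef)
    (K E : ι → ℝ) :
    (∀ E', E ⬝ᵥ R *ᵥ E + K ⬝ᵥ E ≤ E' ⬝ᵥ R *ᵥ E' + K ⬝ᵥ E') ↔ (2 : ℝ) • (R *ᵥ E) + K = 0 := by
  set w := (2 : ℝ) • (R *ᵥ E) + K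
  have hsymm : R.IsSymm := isHermitian_iff_isSymm.mp hR.isHermitian
  have expand : ∀ v, (E + v) ⬝ᵥ R *ᵥ (E + v) + K ⬝ᵥ (E + v) =
      E ⬝ᵥ R *ᵥ E + K ⬝ᵥ E + (v ⬝ᵥ R *ᵥ v + w ⬝ᵥ v) := by
    intro v
    simp only [w, mulVec_add, dotProduct_add, add_dotProduct, smul_dotProduct, smul_eq_mul,
      hsymm.dotProduct_mulVec_comm E v, dotProduct_comm (R *ᵥ E) v]
    ring
  constructor
  · intro hmin
    -- the increment along `E + t • w` is a nonnegative quadratic in `t` with root 0, so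
    -- its discriminant `(w ⬝ᵥ w) ^ 2` is nonpositive
    have hline : ∀ t : ℝ, 0 ≤ (w ⬝ᵥ R *ᵥ w) * (t * t) + (w ⬝ᵥ w) * t + 0 := fun t => by
      have := hmin (E + t • w)
      simp only [expand, mulVec_smul, smul_dotProduct, dotProduct_smul, smul_eq_mul] at this
      linarith
    have hsq : (w ⬝ᵥ w) ^ 2 ≤ 0 := by simpa [discrim] using discrim_le_zero hline
    exact dotProduct_self_eq_zero.mp <|
      (pow_eq_zero_iff two_ne_zero).mp (le_antisymm hsq (sq_nonneg _))
  · intro hw E'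
    have hE' := expand (E' - E)
    rw [add_sub_cancel, hw, zero_dotProduct, add_zero] at hE'
    have hnonneg : 0 ≤ (E' - E) ⬝ᵥ R *ᵥ (E' - E) := by
      simpa using hR.dotProduct_mulVec_nonneg (E' - E)
    linarith

end Quadratic

section Affine

variable {X : Type*} {f g : X → ℝ} {a c : ℝ}

theorem forall_le_iff_of_eq_mul_add (ha : 0 < a) (hf : ∀ x, f x = a * g x + c) (x : X) :
    (∀ y, f x ≤ f y) ↔ ∀ y, g x ≤ g y := by
  simp only [hf, add_le_add_iff_right, mul_le_mul_iff_right₀ ha]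

theorem forall_le_iff_of_eq_sub_mul (ha : 0 < a) (hf : ∀ x, f x = c - a * g x) (x : X) :
    (∀ y, f y ≤ f x) ↔ ∀ y, g x ≤ g y := by
  simp only [hf, sub_le_sub_iff_left, mul_le_mul_iff_right₀ ha]

end Affine

section Trace

variable {ι : Type*} [Fintype ι]

theorem Matrix.trace_mul_affine_mul_transpose {S P : Matrix ι ι ℝ} (hS : S.IsSymm)
    (hP : P.IsSymm) (c : ℝ) (D B : Matrix ι ι ℝ) :
    (S * ((c • D + B) * P * (c • D + B)ᵀ)).trace =
      c ^ 2 * (Dᵀ * S * D * Pᵀ).trace + 2 * c * ((S * B * P)ᵀ * D).trace +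
        (S * (B * P * Bᵀ)).trace := by
  have h1 : (S * (D * P * Dᵀ)).trace = (Dᵀ * S * D * Pᵀ).trace := by
    simp only [hP.eq, Matrix.mul_assoc]
    rw [trace_mul_comm Dᵀ]
    simp only [Matrix.mul_assoc]
  have h2 : (S * (D * P * Bᵀ)).trace = ((S * B * P)ᵀ * D).trace := by
    simp only [transpose_mul, hS.eq, hP.eq, Matrix.mul_assoc]
    rw [trace_mul_comm S]
    simp only [Matrix.mul_assoc]
    rw [trace_mul_comm D]
    simp only [Matrix.mul_assoc]
  have h3 : (S * (B * P * Dᵀ)).trace = ((S * B * P)ᵀ * D).trace := by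
    rw [← trace_transpose]
    simp only [transpose_mul, transpose_transpose, Matrix.mul_assoc]
    rw [trace_mul_comm D]
    simp only [Matrix.mul_assoc]
  simp only [transpose_add, transpose_smul, Matrix.add_mul, Matrix.mul_add, Matrix.smul_mul,
    Matrix.mul_smul, trace_add, trace_smul, smul_eq_mul, h1, h2, h3]
  ring

theorem Matrix.trace_mul_affine_mul {S : Matrix ι ι ℝ} (hS : S.IsSymm) (c : ℝ)
    (D B Y : Matrix ι ι ℝ) :
    (S * ((c • D + B) * Y)).trace = c * ((S * Yᵀ)ᵀ * D).trace + (S * (B * Y)).trace := by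
  have h : (S * (D * Y)).trace = ((S * Yᵀ)ᵀ * D).trace := by
    rw [transpose_mul, transpose_transpose, hS.eq, trace_mul_comm S, Matrix.mul_assoc,
      trace_mul_comm D]
  rw [Matrix.add_mul, Matrix.mul_add, trace_add, Matrix.smul_mul, Matrix.mul_smul, trace_smul,
    smul_eq_mul, h]

end Trace

section ComplexReal

variable {κ l m n : Type*}

theorem Matrix.conjTranspose_map_ofReal (X : Matrix m l ℝ) :
    (X.map Complex.ofReal)ᴴ = (X.map Complex.ofReal)ᵀ := by
  ext; simp

theorem Matrix.IsSymm.isHermitian_map_ofReal {A : Matrix n n ℝ} (hA : A.IsSymm) :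
    (A.map Complex.ofReal).IsHermitian := by
  rw [IsHermitian, conjTranspose_map_ofReal, ← transpose_map, hA.eq]

theorem Matrix.IsHermitian.transpose_map_ofReal_mul_mul [Fintype m] {Z : Matrix m m ℂ}
    (hZ : Z.IsHermitian) (X : Matrix m n ℝ) :
    ((X.map Complex.ofReal)ᵀ * Z * X.map Complex.ofReal).IsHermitian := by
  rw [← conjTranspose_map_ofReal]
  exact isHermitian_conjTranspose_mul_mul _ hZ

theorem Matrix.isHermitian_one_add_I_smul_map_ofReal [DecidableEq n] {J : Matrix n n ℝ}
    (hJ : Jᵀ = -J) : (1 + Complex.I • J.map Complex.ofReal).IsHermitian := by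
  rw [IsHermitian, conjTranspose_add, conjTranspose_one, conjTranspose_smul,
    conjTranspose_map_ofReal, ← transpose_map, hJ]
  ext i j; simp

theorem Matrix.IsHermitian.kronecker {R : Type*} [CommSemiring R] [StarRing R]
    {A : Matrix m m R} {B : Matrix n n R} (hA : A.IsHermitian) (hB : B.IsHermitian) :
    (A ⊗ₖ B).IsHermitian := by
  rw [IsHermitian, conjTranspose_kronecker, hA.eq, hB.eq]

theorem Matrix.IsHermitian.map_re_isSymm {A : Matrix n n ℂ} (hA : A.IsHermitian) :
    (A.map Complex.re).IsSymm :=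
  isHermitian_iff_isSymm.mp (hA.map _ fun z => (Complex.conj_re z).symm)

theorem Matrix.map_re_ofNat_smul (k : ℕ) [k.AtLeastTwo] (Z : Matrix m n ℂ) :
    ((OfNat.ofNat k : ℂ) • Z).map Complex.re = (OfNat.ofNat k : ℝ) • Z.map Complex.re := by
  ext; simp

theorem Matrix.trace_mul_map_re_transpose_mul_mul [Fintype m] [Fintype n] (S : Matrix n n ℝ)
    (X : Matrix m n ℝ) (Z : Matrix m m ℂ) :
    (Sᵀ * ((X.map Complex.ofReal)ᵀ * Z * X.map Complex.ofReal).map Complex.re).trace =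
      ((X * S * Xᵀ)ᵀ * Z.map Complex.re).trace := by
  have hre : ((X.map Complex.ofReal)ᵀ * Z * X.map Complex.ofReal).map Complex.re =
      Xᵀ * Z.map Complex.re * X := by
    ext i j
    simp [mul_apply, Complex.re_sum, Finset.sum_mul]
  rw [hre]
  simp only [transpose_mul, transpose_transpose, Matrix.mul_assoc]
  rw [trace_mul_comm X]
  simp only [Matrix.mul_assoc]

theorem Matrix.trace_mul_map_re_sum_smul_kronecker [Fintype κ] [Fintype m] [Fintype n]
    (W : Matrix (m × n) (m × n) ℝ) (c : κ → ℝ) (β : κ → Matrix m m ℂ) (G : Matrix n n ℂ) :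
    (W * ((∑ j, (c j : ℂ) • β j) ⊗ₖ G).map Complex.re).trace =
      c ⬝ᵥ fun j => (W * (β j ⊗ₖ G).map Complex.re).trace := by
  have hre : ((∑ j, (c j : ℂ) • β j) ⊗ₖ G).map Complex.re =
      ∑ j, c j • (β j ⊗ₖ G).map Complex.re := by
    ext ⟨i, i'⟩ ⟨k, k'⟩
    simp [Matrix.sum_apply, Finset.sum_mul, Complex.re_sum, mul_assoc]
  simp only [hre, Matrix.mul_sum, Matrix.mul_smul, trace_sum, trace_smul, smul_eq_mul,
    dotProduct]

end ComplexReal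

namespace QSDE

theorem isHermitian_ito_gram {p : ℕ} {n : Type*} (M : Matrix (Fin p × Fin 2) n ℝ) :
    ((M.map Complex.ofReal)ᵀ * (1 + Complex.I •
      ((1 : Matrix (Fin p) (Fin p) ℝ) ⊗ₖ !![0, 1; -1, 0]).map Complex.ofReal) *
        M.map Complex.ofReal).IsHermitian := by
  refine (isHermitian_one_add_I_smul_map_ofReal ?_).transpose_map_ofReal_mul_mul M
  ext ⟨a, i⟩ ⟨c, k⟩
  fin_cases i <;> fin_cases k <;> simp [one_apply, eq_comm]

theorem isHermitian_diffusion {κ m n : Type*} [Fintype κ] [Fintype m] {α : Matrix κ κ ℝ}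
    (hα : α.IsSymm) {β : κ → Matrix κ κ ℂ} (hβ : ∀ ℓ, (β ℓ).IsHermitian) (μ : κ → ℝ)
    {G : Matrix m m ℂ} (hG : G.IsHermitian) (X : Matrix (κ × m) n ℝ) :
    ((X.map Complex.ofReal)ᵀ * ((α.map Complex.ofReal + ∑ ℓ, (μ ℓ : ℂ) • β ℓ) ⊗ₖ G) *
      X.map Complex.ofReal).IsHermitian := by
  have hsum : (∑ ℓ, (μ ℓ : ℂ) • β ℓ).IsHermitian :=
    isSelfAdjoint_sum _ fun ℓ _ => (hβ ℓ).smul (Complex.conj_ofReal _)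
  exact ((hα.isHermitian_map_ofReal.add hsum).kronecker hG).transpose_map_ofReal_mul_mul X

variable {ι : Type*} [Fintype ι] (Θ : ι → Matrix ι ι ℝ)

/- `stack Θ` is the paper's `℧ = [Θ₁; …; Θₙ]` and `diamond Θ u` is `Θ ⋄ u = [Θ₁u … Θₙu]`. -/
def stack : Matrix (ι × ι) ι ℝ := of fun p k => Θ p.1 p.2 k

def diamond (u : ι → ℝ) : Matrix ι ι ℝ := of fun j k => (Θ k *ᵥ u) j

theorem vec_diamond (u : ι → ℝ) : vec (diamond Θ u) = stack Θ *ᵥ u := rfl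

theorem trace_transpose_mul_diamond (X : Matrix ι ι ℝ) (u : ι → ℝ) :
    (Xᵀ * diamond Θ u).trace = ((stack Θ)ᵀ *ᵥ vec X) ⬝ᵥ u := by
  rw [← vec_dotProduct_vec, vec_diamond, dotProduct_mulVec, mulVec_transpose]

theorem dotProduct_mulVec_stack_kronecker (P S : Matrix ι ι ℝ) (u : ι → ℝ) :
    u ⬝ᵥ ((stack Θ)ᵀ * (P ⊗ₖ S) * stack Θ) *ᵥ u =
      ((diamond Θ u)ᵀ * S * diamond Θ u * Pᵀ).trace := by
  rw [← mulVec_mulVec, ← mulVec_mulVec, dotProduct_mulVec, vecMul_transpose, ← vec_diamond,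
    kronecker_mulVec_vec, vec_dotProduct_vec]
  simp only [Matrix.mul_assoc]

theorem diamond_mulVec (u v : ι → ℝ) : diamond Θ u *ᵥ v = (∑ ℓ, v ℓ • Θ ℓ) *ᵥ u := by
  ext j
  simp only [diamond, mulVec, dotProduct, of_apply, Matrix.sum_apply, Matrix.smul_apply,
    smul_eq_mul, Finset.sum_mul]
  rw [Finset.sum_comm]
  exact Finset.sum_congr rfl fun _ _ => Finset.sum_congr rfl fun _ _ => by ring

theorem objective_eq_quadratic {S P L : Matrix ι ι ℝ} (hS : S.IsSymm) (hP : P.IsSymm)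
    (hL : L.IsSymm) (B : Matrix ι ι ℝ) (μ b h u : ι → ℝ) :
    2 * (S * (((2 : ℝ) • diamond Θ u + B) * P * ((2 : ℝ) • diamond Θ u + B)ᵀ)).trace +
      2 * (S * (((2 : ℝ) • diamond Θ u + B) * (L + (2 : ℝ) • vecMulVec μ b))).trace +
      4 * ((((2 : ℝ) • diamond Θ u + B) *ᵥ μ + b) ⬝ᵥ h) =
    8 * (u ⬝ᵥ ((stack Θ)ᵀ * (P ⊗ₖ S) * stack Θ) *ᵥ u +
        ((stack Θ)ᵀ *ᵥ vec (S * (B * P + (1 / 2 : ℝ) • L + vecMulVec b μ)) +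
          (∑ ℓ, μ ℓ • Θ ℓ)ᵀ *ᵥ h) ⬝ᵥ u) +
      (2 * (S * (B * P * Bᵀ)).trace + 2 * (S * (B * (L + (2 : ℝ) • vecMulVec μ b))).trace +
        4 * ((B *ᵥ μ + b) ⬝ᵥ h)) := by
  have hY : (L + (2 : ℝ) • vecMulVec μ b)ᵀ = L + (2 : ℝ) • vecMulVec b μ := by
    rw [transpose_add, transpose_smul, hL.eq, transpose_vecMulVec]
  have hdrift : (((2 : ℝ) • diamond Θ u + B) *ᵥ μ + b) ⬝ᵥ h =
      2 * (((∑ ℓ, μ ℓ • Θ ℓ)ᵀ *ᵥ h) ⬝ᵥ u) + (B *ᵥ μ + b) ⬝ᵥ h := by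
    rw [add_mulVec, smul_mulVec, diamond_mulVec, add_assoc, add_dotProduct, smul_dotProduct,
      smul_eq_mul, dotProduct_comm, dotProduct_mulVec, mulVec_transpose]
  rw [trace_mul_affine_mul_transpose hS hP, trace_mul_affine_mul hS, hdrift, hY,
    dotProduct_mulVec_stack_kronecker, add_dotProduct _ ((∑ ℓ, μ ℓ • Θ ℓ)ᵀ *ᵥ h),
    ← trace_transpose_mul_diamond]
  simp only [transpose_add, transpose_smul, Matrix.mul_add, Matrix.add_mul, Matrix.mul_smul,
    Matrix.smul_mul, trace_add, trace_smul, smul_eq_mul, Matrix.mul_assoc]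
  ring

end QSDE

theorem stmt_18_general (n p ν : ℕ)
    (α : Matrix (Fin n) (Fin n) ℝ) (hα : α.IsSymm)
    (β : Fin n → Matrix (Fin n) (Fin n) ℂ) (hβ : ∀ ℓ, (β ℓ).IsHermitian)
    (Θ : Fin n → Matrix (Fin n) (Fin n) ℝ)
    (mho : Matrix (Fin n × Fin n) (Fin n) ℝ)
    (hmho : ∀ ℓ j k, mho (ℓ, j) k = Θ ℓ j k)
    (col : Matrix (Fin n) (Fin n) ℝ → (Fin n × Fin n) → ℝ)
    (hcol : ∀ X k j, col X (k, j) = X j k)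
    (diam : (Fin n → ℝ) → Matrix (Fin n) (Fin n) ℝ)
    (hdiam : ∀ u j k, diam u j k = (Θ k *ᵥ u) j)
    (M : Matrix (Fin p × Fin 2) (Fin n) ℝ)
    (J : Matrix (Fin p × Fin 2) (Fin p × Fin 2) ℝ)
    (hJ : J = (1 : Matrix (Fin p) (Fin p) ℝ) ⊗ₖ !![0, 1; -1, 0])
    (Ω : Matrix (Fin p × Fin 2) (Fin p × Fin 2) ℂ)
    (hΩ : Ω = 1 + Complex.I • J.map (fun x : ℝ => (x : ℂ)))
    (At : Matrix (Fin n) (Fin n) ℝ)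
    (A : (Fin n → ℝ) → Matrix (Fin n) (Fin n) ℝ)
    (hA : ∀ E, A E = (2 : ℝ) • diam E + At)
    (b : Fin n → ℝ)
    (μ₀ : Fin n → ℝ)
    (P : Matrix (Fin n) (Fin n) ℝ) (hP : P.PosSemidef)
    (F : Matrix (Fin ν) (Fin n) ℝ) (hFP : F * hP.sqrt ≠ 0)
    (S : Matrix (Fin n) (Fin n) ℝ) (hS : S = Fᵀ * F)
    (mhoC : Matrix (Fin n × Fin n) (Fin n) ℂ)
    (hmhoC : mhoC = mho.map (fun x : ℝ => (x : ℂ)))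
    (G : Matrix (Fin n) (Fin n) ℂ)
    (hG : G = (M.map (fun x : ℝ => (x : ℂ)))ᵀ * Ω * M.map (fun x : ℝ => (x : ℂ)))
    (Λ₀ : Matrix (Fin n) (Fin n) ℂ)
    (hΛ₀ : Λ₀ = (4 : ℂ) • (mhoCᵀ *
      ((α.map (fun x : ℝ => (x : ℂ)) + ∑ ℓ, ((μ₀ ℓ : ℝ) : ℂ) • β ℓ) ⊗ₖ G) * mhoC))
    (hpos : 0 < (Sᵀ * Λ₀.map Complex.re).trace)
    (Λdot : (Fin n → ℝ) → Matrix (Fin n) (Fin n) ℂ)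
    (hΛdot : ∀ E, Λdot E = (4 : ℂ) • (mhoCᵀ *
      ((∑ ℓ, (((A E *ᵥ μ₀ + b) ℓ : ℝ) : ℂ) • β ℓ) ⊗ₖ G) * mhoC))
    (g : (Fin n → ℝ) → ℝ)
    (hg : ∀ E, g E = (Sᵀ * ((2 : ℝ) • (A E * P * (A E)ᵀ) +
        (2 : ℝ) • (A E * (Λ₀.map Complex.re + (2 : ℝ) • vecMulVec μ₀ b)) +
        (Λdot E).map Complex.re)).trace +
      2 * ((F *ᵥ b) ⬝ᵥ (F *ᵥ b)))
    (R : Matrix (Fin n) (Fin n) ℝ) (hR : R = mhoᵀ * (P ⊗ₖ S) * mho)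
    (K : Fin n → ℝ)
    (hK : ∀ k, K k =
      (mhoᵀ *ᵥ col (S * (At * P + (1 / 2 : ℝ) • Λ₀.map Complex.re + vecMulVec b μ₀))) k +
      ((mho * S * mhoᵀ)ᵀ *
        ((∑ j, ((((∑ ℓ, μ₀ ℓ • Θ ℓ) j k : ℝ)) : ℂ) • β j) ⊗ₖ G).map Complex.re).trace)
    (τ' : ℝ)
    (hτ' : τ' = ((F * hP.sqrt)ᵀ * (F * hP.sqrt)).trace / (Sᵀ * Λ₀.map Complex.re).trace)
    (τ'' : (Fin n → ℝ) → ℝ)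
    (hτ'' : ∀ E, τ'' E = -(g E) * τ' ^ 2 / (Sᵀ * Λ₀.map Complex.re).trace)
    (τhat : ℝ → (Fin n → ℝ) → ℝ)
    (hτhat : ∀ ε E, τhat ε E = τ' * ε + τ'' E * ε ^ 2 / 2) :
    ∀ E : Fin n → ℝ,
      ((∀ E' : Fin n → ℝ, g E ≤ g E') ↔ (2 : ℝ) • (R *ᵥ E) + K = 0) ∧
      (∀ ε : ℝ, 0 < ε →
        ((∀ E' : Fin n → ℝ, τhat ε E' ≤ τhat ε E) ↔ (2 : ℝ) • (R *ᵥ E) + K = 0)) := by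
  obtain rfl : col = vec := funext fun X => funext fun ⟨k, j⟩ => hcol X k j
  obtain rfl : mho = QSDE.stack Θ := ext fun ⟨ℓ, j⟩ k => hmho ℓ j k
  obtain rfl : diam = QSDE.diamond Θ := funext fun u => ext fun j k => hdiam u j k
  subst hmhoC
  have hSsymm : S.IsSymm := by rw [hS, IsSymm, transpose_mul, transpose_transpose]
  have hPsymm : P.IsSymm := isHermitian_iff_isSymm.mp hP.isHermitian
  have hG' : G.IsHermitian := by
    rw [hG, hΩ, hJ]
    exact QSDE.isHermitian_ito_gram M
  have hLsymm : (Λ₀.map Complex.re).IsSymm := by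
    rw [hΛ₀]
    exact ((QSDE.isHermitian_diffusion hα hβ μ₀ hG' _).smul (by simp [IsSelfAdjoint])).map_re_isSymm
  set h : Fin n → ℝ := fun j =>
    ((QSDE.stack Θ * S * (QSDE.stack Θ)ᵀ)ᵀ * (β j ⊗ₖ G).map Complex.re).trace
  have hK' : K = (QSDE.stack Θ)ᵀ *ᵥ
      vec (S * (At * P + (1 / 2 : ℝ) • Λ₀.map Complex.re + vecMulVec b μ₀)) +
      (∑ ℓ, μ₀ ℓ • Θ ℓ)ᵀ *ᵥ h := by
    ext k
    rw [hK k, trace_mul_map_re_sum_smul_kronecker]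
    rfl
  obtain ⟨C, hquad⟩ : ∃ C, ∀ E, g E = 8 * (E ⬝ᵥ R *ᵥ E + K ⬝ᵥ E) + C := ⟨_, fun E => by
    rw [hg, Matrix.mul_add, Matrix.mul_add, trace_add, trace_add, hΛdot, map_re_ofNat_smul,
      hA, Matrix.mul_smul, Matrix.mul_smul, Matrix.mul_smul, trace_smul, trace_smul, trace_smul,
      trace_mul_map_re_transpose_mul_mul, trace_mul_map_re_sum_smul_kronecker, smul_eq_mul,
      smul_eq_mul, smul_eq_mul, hSsymm.eq, QSDE.objective_eq_quadratic Θ hSsymm hPsymm hLsymm,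
      ← hR, ← hK', add_assoc]⟩
  have hRpsd : R.PosSemidef := by
    rw [hR, hS]
    simpa [conjTranspose_eq_transpose_of_trivial] using
      (hP.kronecker (posSemidef_conjTranspose_mul_self F)).conjTranspose_mul_mul_same _
  have hgmin : ∀ E, (∀ E', g E ≤ g E') ↔ (2 : ℝ) • (R *ᵥ E) + K = 0 := fun E =>
    (forall_le_iff_of_eq_mul_add (by norm_num) hquad E).trans (hRpsd.forall_quadratic_le_iff K E)
  have hτ' : τ' ≠ 0 := by
    rw [hτ', ← conjTranspose_eq_transpose_of_trivial]
    exact div_ne_zero (mt trace_conjTranspose_mul_self_eq_zero_iff.mp hFP) hpos.ne'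
  refine fun E => ⟨hgmin E, fun ε hε => ?_⟩
  exact (forall_le_iff_of_eq_sub_mul (c := τ' * ε)
    (a := τ' ^ 2 * ε ^ 2 / (2 * (Sᵀ * Λ₀.map Complex.re).trace)) (by positivity)
    (fun E => by rw [hτhat, hτ'']; ring) E).trans (hgmin E)

/-- Theorem 1 of the paper: for the quasilinear QSDE data built from the
structure constants `α`, `β` (sections `β ℓ`, `(β ℓ) j k = β_{jkℓ}`, CCR matrices
`Θ ℓ = Im β_ℓ`), coupling parameters `M`, `N` (field dimension `m = 2p` even), Ito
matrices `J`, `Ω`, drift matrix `A(E) = 2(Θ ⋄ E) + Ã` and drift vector `b`, initial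
data `μ₀`, `P ⪰ 0`, weighting `Σ = FᵀF` with `F√P ≠ 0`, diffusion data `Λ₀`
(with `⟨Σ, Re Λ₀⟩ > 0`) and `Λ̇₀(E)`, the energy vector `E` is a global minimizer of
`g(E) = ⟨Σ, 2A(E)PA(E)ᵀ + 2A(E)(Re Λ₀ + 2μ₀bᵀ) + Re Λ̇₀(E)⟩ + 2|Fb|²` over `ℝⁿ`
(equivalently, for each `ε > 0`, a global maximizer of the approximate decoherence time
`τ̂(ε) = τ′ε + ½τ″(E)ε²`) if and only if `2RE + K = 0`. -/
theorem stmt_18 (n p ν : ℕ) (hn : 1 ≤ n) (hp : 1 ≤ p)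
    (α : Matrix (Fin n) (Fin n) ℝ) (hα : α.IsSymm)
    (β : Fin n → Matrix (Fin n) (Fin n) ℂ) (hβ : ∀ ℓ, (β ℓ).IsHermitian)
    (Θ : Fin n → Matrix (Fin n) (Fin n) ℝ) (hΘ : ∀ ℓ, Θ ℓ = (β ℓ).map Complex.im)
    (mho : Matrix (Fin n × Fin n) (Fin n) ℝ)
    (hmho : ∀ ℓ j k, mho (ℓ, j) k = Θ ℓ j k)
    (col : Matrix (Fin n) (Fin n) ℝ → (Fin n × Fin n) → ℝ)
    (hcol : ∀ X k j, col X (k, j) = X j k)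
    (diam : (Fin n → ℝ) → Matrix (Fin n) (Fin n) ℝ)
    (hdiam : ∀ u j k, diam u j k = (Θ k *ᵥ u) j)
    (M : Matrix (Fin p × Fin 2) (Fin n) ℝ) (N : Fin p × Fin 2 → ℝ)
    (J : Matrix (Fin p × Fin 2) (Fin p × Fin 2) ℝ)
    (hJ : J = (1 : Matrix (Fin p) (Fin p) ℝ) ⊗ₖ !![0, 1; -1, 0])
    (Ω : Matrix (Fin p × Fin 2) (Fin p × Fin 2) ℂ)
    (hΩ : Ω = 1 + Complex.I • J.map (fun x : ℝ => (x : ℂ)))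
    -- θ_{ℓ••} and Re β_{ℓ••} (recall θ_{jkℓ} = (Θ ℓ) j k, β_{jkℓ} = (β ℓ) j k)
    (θldd Reβldd : Fin n → Matrix (Fin n) (Fin n) ℝ)
    (hθldd : ∀ ℓ j k, θldd ℓ j k = Θ k ℓ j)
    (hReβldd : ∀ ℓ j k, Reβldd ℓ j k = (β k ℓ j).re)
    (At : Matrix (Fin n) (Fin n) ℝ)
    (hAt : At = (2 : ℝ) • diam (Mᵀ *ᵥ (J *ᵥ N)) +
      (2 : ℝ) • ∑ ℓ, Θ ℓ * Mᵀ * (M * θldd ℓ + J * M * Reβldd ℓ))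
    (A : (Fin n → ℝ) → Matrix (Fin n) (Fin n) ℝ)
    (hA : ∀ E, A E = (2 : ℝ) • diam E + At)
    (b : Fin n → ℝ)
    (hb : b = -((2 : ℝ) • (mhoᵀ *ᵥ col (Mᵀ * J * M * α))))
    (μ₀ : Fin n → ℝ)
    (P : Matrix (Fin n) (Fin n) ℝ) (hPsymm : P.IsSymm) (hP : P.PosSemidef)
    (F : Matrix (Fin ν) (Fin n) ℝ) (hFP : F * hP.sqrt ≠ 0)
    (S : Matrix (Fin n) (Fin n) ℝ) (hS : S = Fᵀ * F)
    (mhoC : Matrix (Fin n × Fin n) (Fin n) ℂ)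
    (hmhoC : mhoC = mho.map (fun x : ℝ => (x : ℂ)))
    (G : Matrix (Fin n) (Fin n) ℂ)
    (hG : G = (M.map (fun x : ℝ => (x : ℂ)))ᵀ * Ω * M.map (fun x : ℝ => (x : ℂ)))
    (Λ₀ : Matrix (Fin n) (Fin n) ℂ)
    (hΛ₀ : Λ₀ = (4 : ℂ) • (mhoCᵀ *
      ((α.map (fun x : ℝ => (x : ℂ)) + ∑ ℓ, ((μ₀ ℓ : ℝ) : ℂ) • β ℓ) ⊗ₖ G) * mhoC))
    (hpos : 0 < (Sᵀ * Λ₀.map Complex.re).trace)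
    (Λdot : (Fin n → ℝ) → Matrix (Fin n) (Fin n) ℂ)
    (hΛdot : ∀ E, Λdot E = (4 : ℂ) • (mhoCᵀ *
      ((∑ ℓ, (((A E *ᵥ μ₀ + b) ℓ : ℝ) : ℂ) • β ℓ) ⊗ₖ G) * mhoC))
    (g : (Fin n → ℝ) → ℝ)
    (hg : ∀ E, g E = (Sᵀ * ((2 : ℝ) • (A E * P * (A E)ᵀ) +
        (2 : ℝ) • (A E * (Λ₀.map Complex.re + (2 : ℝ) • vecMulVec μ₀ b)) +
        (Λdot E).map Complex.re)).trace +
      2 * ((F *ᵥ b) ⬝ᵥ (F *ᵥ b)))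
    (R : Matrix (Fin n) (Fin n) ℝ) (hR : R = mhoᵀ * (P ⊗ₖ S) * mho)
    (K : Fin n → ℝ)
    (hK : ∀ k, K k =
      (mhoᵀ *ᵥ col (S * (At * P + (1 / 2 : ℝ) • Λ₀.map Complex.re + vecMulVec b μ₀))) k +
      ((mho * S * mhoᵀ)ᵀ *
        ((∑ j, ((((∑ ℓ, μ₀ ℓ • Θ ℓ) j k : ℝ)) : ℂ) • β j) ⊗ₖ G).map Complex.re).trace)
    (τ' : ℝ)
    (hτ' : τ' = ((F * hP.sqrt)ᵀ * (F * hP.sqrt)).trace / (Sᵀ * Λ₀.map Complex.re).trace)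
    (τ'' : (Fin n → ℝ) → ℝ)
    (hτ'' : ∀ E, τ'' E = -(g E) * τ' ^ 2 / (Sᵀ * Λ₀.map Complex.re).trace)
    (τhat : ℝ → (Fin n → ℝ) → ℝ)
    (hτhat : ∀ ε E, τhat ε E = τ' * ε + τ'' E * ε ^ 2 / 2) :
    ∀ E : Fin n → ℝ,
      ((∀ E' : Fin n → ℝ, g E ≤ g E') ↔ (2 : ℝ) • (R *ᵥ E) + K = 0) ∧
      (∀ ε : ℝ, 0 < ε →
        ((∀ E' : Fin n → ℝ, τhat ε E' ≤ τhat ε E) ↔ (2 : ℝ) • (R *ᵥ E) + K = 0)) :=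
  stmt_18_general n p ν α hα β hβ Θ mho hmho col hcol diam hdiam M J hJ Ω hΩ At A hA b μ₀ P hP F hFP
    S hS mhoC hmhoC G hG Λ₀ hΛ₀ hpos Λdot hΛdot g hg R hR K hK τ' hτ' τ'' hτ'' τhat hτhat
end

section
/- Let n₁, n₂ ≥ 1 and n := n₁ + n₂ + n₁n₂. Let R ∈ ℝ^{n×n} be symmetric positive semidefinite and K ∈ ℝⁿ, and define the convex quadratic objective g(E) := 8(EᵀRE + KᵀE) for E ∈ ℝⁿ (whose gradient is 8(2RE + K), the form taken by the gradient of the approximate-decoherence-time objective Δ̈(0) for the interconnection of two quantum systems). Partition E = (E⁽¹⁾; E⁽²⁾; E⁽¹²⁾) into blocks of sizes n₁, n₂, n₁n₂; write the last n₁n₂ rows of R as the block row [R₁ R₂ R₁₂] with R₁ ∈ ℝ^{n₁n₂×n₁}, R₂ ∈ ℝ^{n₁n₂×n₂}, R₁₂ ∈ ℝ^{n₁n₂×n₁n₂}, and let K₁₂ ∈ ℝ^{n₁n₂} be the last n₁n₂ entries of K. Fix E⁽¹⁾ ∈ ℝ^{n₁} and E⁽²⁾ ∈ ℝ^{n₂}.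 Then E⁽¹²⁾ ∈ ℝ^{n₁n₂} is a global minimizer of the function x ↦ g(E⁽¹⁾; E⁽²⁾; x) over ℝ^{n₁n₂} if and only if 2R₁₂E⁽¹²⁾ + Q = 0, where Q := K₁₂ + 2R₁E⁽¹⁾ + 2R₂E⁽²⁾. -/
/-!
Writing `E = E₀ + (0; 0; x)` with `E₀ = (E⁽¹⁾; E⁽²⁾; 0)`, the objective splits as
`g E = g E₀ + 8 (xᵀR₁₂x + Qᵀx)`, so only the quadratic `f x = xᵀR₁₂x + Qᵀx` matters, and
`R₁₂` is positive semidefinite as a principal submatrix of `R`. For such `f` and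
`v = 2R₁₂x₀ + Q` one has `f (x₀ + d) = f x₀ + dᵀR₁₂d + dᵀv`: if `v = 0` the excess is
nonnegative, and conversely minimality along the line `x₀ + t v` forces `|v|² = 0`.
-/

open Matrix

section Quadratic

variable {ι R : Type*} [Fintype ι]

theorem Matrix.IsSymm.quadratic_add [CommRing R] {A : Matrix ι ι R} (hA : A.IsSymm)
    (q x d : ι → R) :
    (x + d) ⬝ᵥ A *ᵥ (x + d) + q ⬝ᵥ (x + d) =
      x ⬝ᵥ A *ᵥ x + q ⬝ᵥ x + (d ⬝ᵥ A *ᵥ d + d ⬝ᵥ ((2 : R) • (A *ᵥ x) + q)) := by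
  have hxd : x ⬝ᵥ A *ᵥ d = d ⬝ᵥ A *ᵥ x := by
    rw [dotProduct_mulVec, ← mulVec_transpose, hA.eq, dotProduct_comm]
  simp only [mulVec_add, dotProduct_add, add_dotProduct, dotProduct_smul, smul_eq_mul, hxd,
    dotProduct_comm q]
  ring

theorem Matrix.PosSemidef.forall_le_quadratic_iff {A : Matrix ι ι ℝ} (hA : A.PosSemidef)
    (q x : ι → ℝ) :
    (∀ y, x ⬝ᵥ A *ᵥ x + q ⬝ᵥ x ≤ y ⬝ᵥ A *ᵥ y + q ⬝ᵥ y) ↔ (2 : ℝ) • (A *ᵥ x) + q = 0 := by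
  have hsymm : A.IsSymm := isHermitian_iff_isSymm.mp hA.isHermitian
  have hnonneg (d : ι → ℝ) : 0 ≤ d ⬝ᵥ A *ᵥ d := by
    simpa using hA.dotProduct_mulVec_nonneg d
  refine ⟨fun hmin => ?_, fun hv y => ?_⟩
  · set v := (2 : ℝ) • (A *ᵥ x) + q
    -- the excess along `x + t v` is a nonnegative quadratic in `t`, with discriminant `|v|⁴`
    have hline (t : ℝ) : 0 ≤ v ⬝ᵥ A *ᵥ v * (t * t) + v ⬝ᵥ v * t + 0 := by
      have := hmin (x + t • v)
      rw [hsymm.quadratic_add] at this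
      simp only [mulVec_smul, dotProduct_smul, smul_dotProduct, smul_eq_mul] at this
      linarith
    have hvv : v ⬝ᵥ v = 0 := by
      have := discrim_le_zero hline
      rw [discrim] at this
      nlinarith
    exact dotProduct_self_eq_zero.mp hvv
  · have := hsymm.quadratic_add q x (y - x)
    rw [add_sub_cancel, hv, dotProduct_zero, add_zero] at this
    linarith [hnonneg (y - x)]

end Quadratic

section Blocks

variable {α β γ R : Type*} [Fintype α] [Fintype β] [Fintype γ]

theorem sumElim_zero_zero_dotProduct [NonUnitalNonAssocSemiring R] (x : γ → R)
    (w : α ⊕ β ⊕ γ → R) :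
    ((0 : α → R) ⊕ᵥ ((0 : β → R) ⊕ᵥ x)) ⬝ᵥ w = x ⬝ᵥ (w ∘ Sum.inr ∘ Sum.inr) := by
  simp [dotProduct, Fintype.sum_sum_type]

theorem mulVec_sumElim_comp_inr_inr [NonUnitalNonAssocSemiring R]
    (M : Matrix (α ⊕ β ⊕ γ) (α ⊕ β ⊕ γ) R) (u : α → R) (v : β → R) (x : γ → R) :
    (M *ᵥ (u ⊕ᵥ (v ⊕ᵥ x))) ∘ Sum.inr ∘ Sum.inr =
      M.submatrix (Sum.inr ∘ Sum.inr) Sum.inl *ᵥ u +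
        M.submatrix (Sum.inr ∘ Sum.inr) (Sum.inr ∘ Sum.inl) *ᵥ v +
          M.submatrix (Sum.inr ∘ Sum.inr) (Sum.inr ∘ Sum.inr) *ᵥ x := by
  ext i
  simp [mulVec, dotProduct, Fintype.sum_sum_type, add_assoc]

theorem Matrix.IsSymm.quadratic_sumElim [CommRing R] {M : Matrix (α ⊕ β ⊕ γ) (α ⊕ β ⊕ γ) R}
    (hM : M.IsSymm) (k : α ⊕ β ⊕ γ → R) (u : α → R) (v : β → R) (x : γ → R) :
    (u ⊕ᵥ (v ⊕ᵥ x)) ⬝ᵥ M *ᵥ (u ⊕ᵥ (v ⊕ᵥ x)) + k ⬝ᵥ (u ⊕ᵥ (v ⊕ᵥ x)) =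
      (u ⊕ᵥ (v ⊕ᵥ 0)) ⬝ᵥ M *ᵥ (u ⊕ᵥ (v ⊕ᵥ 0)) + k ⬝ᵥ (u ⊕ᵥ (v ⊕ᵥ 0)) +
        (x ⬝ᵥ M.submatrix (Sum.inr ∘ Sum.inr) (Sum.inr ∘ Sum.inr) *ᵥ x +
          (k ∘ Sum.inr ∘ Sum.inr + (2 : R) • (M.submatrix (Sum.inr ∘ Sum.inr) Sum.inl *ᵥ u) +
            (2 : R) • (M.submatrix (Sum.inr ∘ Sum.inr) (Sum.inr ∘ Sum.inl) *ᵥ v)) ⬝ᵥ x) := by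
  have hsplit : u ⊕ᵥ (v ⊕ᵥ x) = (u ⊕ᵥ (v ⊕ᵥ 0)) + ((0 : α → R) ⊕ᵥ ((0 : β → R) ⊕ᵥ x)) := by
    ext (i | i | i) <;> simp
  rw [hsplit, hM.quadratic_add, sumElim_zero_zero_dotProduct, sumElim_zero_zero_dotProduct]
  congr 2
  · rw [mulVec_sumElim_comp_inr_inr]
    simp
  · rw [dotProduct_comm]
    congr 1
    rw [← Function.comp_assoc, Function.comp_assoc, Pi.add_comp, Pi.smul_comp,
      mulVec_sumElim_comp_inr_inr, mulVec_zero, add_zero, smul_add]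
    abel

end Blocks

theorem stmt_19_general (n₁ n₂ : ℕ)
    (R : Matrix (Fin n₁ ⊕ Fin n₂ ⊕ Fin (n₁ * n₂)) (Fin n₁ ⊕ Fin n₂ ⊕ Fin (n₁ * n₂)) ℝ)
    (hRpsd : R.PosSemidef)
    (K : Fin n₁ ⊕ Fin n₂ ⊕ Fin (n₁ * n₂) → ℝ)
    (g : (Fin n₁ ⊕ Fin n₂ ⊕ Fin (n₁ * n₂) → ℝ) → ℝ)
    (hg : ∀ E, g E = 8 * (E ⬝ᵥ (R *ᵥ E) + K ⬝ᵥ E))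
    (R₁ : Matrix (Fin (n₁ * n₂)) (Fin n₁) ℝ)
    (hR₁ : ∀ i j, R₁ i j = R (Sum.inr (Sum.inr i)) (Sum.inl j))
    (R₂ : Matrix (Fin (n₁ * n₂)) (Fin n₂) ℝ)
    (hR₂ : ∀ i j, R₂ i j = R (Sum.inr (Sum.inr i)) (Sum.inr (Sum.inl j)))
    (R₁₂ : Matrix (Fin (n₁ * n₂)) (Fin (n₁ * n₂)) ℝ)
    (hR₁₂ : ∀ i j, R₁₂ i j = R (Sum.inr (Sum.inr i)) (Sum.inr (Sum.inr j)))
    (K₁₂ : Fin (n₁ * n₂) → ℝ)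
    (hK₁₂ : ∀ i, K₁₂ i = K (Sum.inr (Sum.inr i)))
    (E₁ : Fin n₁ → ℝ) (E₂ : Fin n₂ → ℝ)
    (Q : Fin (n₁ * n₂) → ℝ)
    (hQ : Q = K₁₂ + (2 : ℝ) • (R₁ *ᵥ E₁) + (2 : ℝ) • (R₂ *ᵥ E₂)) :
    ∀ E₁₂ : Fin (n₁ * n₂) → ℝ,
      (∀ x : Fin (n₁ * n₂) → ℝ,
          g (Sum.elim E₁ (Sum.elim E₂ E₁₂)) ≤ g (Sum.elim E₁ (Sum.elim E₂ x))) ↔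
        (2 : ℝ) • (R₁₂ *ᵥ E₁₂) + Q = 0 := by
  intro E₁₂
  have hR₁' : R₁ = R.submatrix (Sum.inr ∘ Sum.inr) Sum.inl := Matrix.ext hR₁
  have hR₂' : R₂ = R.submatrix (Sum.inr ∘ Sum.inr) (Sum.inr ∘ Sum.inl) := Matrix.ext hR₂
  have hR₁₂' : R₁₂ = R.submatrix (Sum.inr ∘ Sum.inr) (Sum.inr ∘ Sum.inr) := Matrix.ext hR₁₂
  have hK₁₂' : K₁₂ = K ∘ Sum.inr ∘ Sum.inr := funext hK₁₂
  have hslice (x : Fin (n₁ * n₂) → ℝ) :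
      g (E₁ ⊕ᵥ (E₂ ⊕ᵥ x)) = g (E₁ ⊕ᵥ (E₂ ⊕ᵥ 0)) + 8 * (x ⬝ᵥ R₁₂ *ᵥ x + Q ⬝ᵥ x) := by
    rw [hg, hg, (isHermitian_iff_isSymm.mp hRpsd.isHermitian).quadratic_sumElim, hQ, hR₁',
      hR₂', hR₁₂', hK₁₂']
    ring
  have hR₁₂psd : R₁₂.PosSemidef := hR₁₂' ▸ hRpsd.submatrix (Sum.inr ∘ Sum.inr)
  refine (forall_congr' fun x => ?_).trans (hR₁₂psd.forall_le_quadratic_iff Q E₁₂)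
  rw [hslice E₁₂, hslice x, add_le_add_iff_left, mul_le_mul_iff_right₀ (by norm_num)]

/-- Theorem 2 of the paper: with the augmented index set partitioned as
`Fin n₁ ⊕ Fin n₂ ⊕ Fin (n₁n₂)` (so `n = n₁ + n₂ + n₁n₂`), `R ⪰ 0` symmetric, `K ∈ ℝⁿ`,
and the convex quadratic `g(E) := 8(EᵀRE + KᵀE)`, where the last `n₁n₂` rows of `R`
form the block row `[R₁ R₂ R₁₂]` and `K₁₂` is the last block of `K`: for fixed `E⁽¹⁾`,
`E⁽²⁾`, the vector `E⁽¹²⁾` is a global minimizer of `x ↦ g(E⁽¹⁾; E⁽²⁾; x)` iff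
`2R₁₂E⁽¹²⁾ + Q = 0` with `Q := K₁₂ + 2R₁E⁽¹⁾ + 2R₂E⁽²⁾`. -/
theorem stmt_19 (n₁ n₂ : ℕ) (hn₁ : 1 ≤ n₁) (hn₂ : 1 ≤ n₂)
    (R : Matrix (Fin n₁ ⊕ Fin n₂ ⊕ Fin (n₁ * n₂)) (Fin n₁ ⊕ Fin n₂ ⊕ Fin (n₁ * n₂)) ℝ)
    (hRsymm : R.IsSymm) (hRpsd : R.PosSemidef)
    (K : Fin n₁ ⊕ Fin n₂ ⊕ Fin (n₁ * n₂) → ℝ)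
    (g : (Fin n₁ ⊕ Fin n₂ ⊕ Fin (n₁ * n₂) → ℝ) → ℝ)
    (hg : ∀ E, g E = 8 * (E ⬝ᵥ (R *ᵥ E) + K ⬝ᵥ E))
    (R₁ : Matrix (Fin (n₁ * n₂)) (Fin n₁) ℝ)
    (hR₁ : ∀ i j, R₁ i j = R (Sum.inr (Sum.inr i)) (Sum.inl j))
    (R₂ : Matrix (Fin (n₁ * n₂)) (Fin n₂) ℝ)
    (hR₂ : ∀ i j, R₂ i j = R (Sum.inr (Sum.inr i)) (Sum.inr (Sum.inl j)))
    (R₁₂ : Matrix (Fin (n₁ * n₂)) (Fin (n₁ * n₂)) ℝ)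
    (hR₁₂ : ∀ i j, R₁₂ i j = R (Sum.inr (Sum.inr i)) (Sum.inr (Sum.inr j)))
    (K₁₂ : Fin (n₁ * n₂) → ℝ)
    (hK₁₂ : ∀ i, K₁₂ i = K (Sum.inr (Sum.inr i)))
    (E₁ : Fin n₁ → ℝ) (E₂ : Fin n₂ → ℝ)
    (Q : Fin (n₁ * n₂) → ℝ)
    (hQ : Q = K₁₂ + (2 : ℝ) • (R₁ *ᵥ E₁) + (2 : ℝ) • (R₂ *ᵥ E₂)) :
    ∀ E₁₂ : Fin (n₁ * n₂) → ℝ,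
      (∀ x : Fin (n₁ * n₂) → ℝ,
          g (Sum.elim E₁ (Sum.elim E₂ E₁₂)) ≤ g (Sum.elim E₁ (Sum.elim E₂ x))) ↔
        (2 : ℝ) • (R₁₂ *ᵥ E₁₂) + Q = 0 :=
  stmt_19_general n₁ n₂ R hRpsd K g hg R₁ hR₁ R₂ hR₂ R₁₂ hR₁₂ K₁₂ hK₁₂ E₁ E₂ Q hQ
end
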